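/- Every solution α : (1,∞) → ℝ of the ODE dα/dr = -(9/2)·r(r²+1)/((r²+2)(r+1)(r-1))·α(r) is of the form α(r) = K/((r²+2)^(3/4)(r+1)^(3/2)(r-1)^(3/2)) for some constant K ∈ ℝ. -/

import Mathlib

/-!
The weight `g(r) = (r²+2)^(3/4) (r+1)^(3/2) (r-1)^(3/2)` is positive on `(1,∞)` and solves the
adjoint equation `g' = c g`, where `c(r) = (9/2) r(r²+1)/((r²+2)(r+1)(r-1))` is the coefficient of
the instanton ODE `α' = -c α` (logarithmic differentiation: `c = (3/4)·2r/(r²+2) + (3/2)/(r+1) +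
(3/2)/(r-1)`). Hence `(α g)' = 0`, so `α g` is constant on the connected set `(1,∞)`.
-/

open Set

theorem IsOpen.exists_eq_div_of_hasDerivAt_neg_mul {𝕜 : Type*} [RCLike 𝕜] {s : Set 𝕜}
    (hs : IsOpen s) (hs' : IsPreconnected s) {c α g : 𝕜 → 𝕜}
    (hg : ∀ x ∈ s, HasDerivAt g (c x * g x) x) (hg₀ : ∀ x ∈ s, g x ≠ 0)
    (hα : ∀ x ∈ s, HasDerivAt α (-c x * α x) x) :
    ∃ K, ∀ x ∈ s, α x = K / g x := by
  have hderiv : ∀ x ∈ s, HasDerivAt (α * g) 0 x := fun x hx =>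
    ((hα x hx).mul (hg x hx)).congr_deriv (by ring)
  obtain ⟨K, hK⟩ := hs.exists_is_const_of_deriv_eq_zero hs'
    (fun x hx => (hderiv x hx).differentiableAt.differentiableWithinAt)
    (fun x hx => (hderiv x hx).deriv)
  exact ⟨K, fun x hx => (eq_div_iff (hg₀ x hx)).2 (hK x hx)⟩

noncomputable def stenzelWeight (r : ℝ) : ℝ :=
  (r ^ 2 + 2) ^ ((3 : ℝ) / 4) * (r + 1) ^ ((3 : ℝ) / 2) * (r - 1) ^ ((3 : ℝ) / 2)

theorem stenzelWeight_pos {r : ℝ} (hr : 1 < r) : 0 < stenzelWeight r := by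
  unfold stenzelWeight
  have : 0 < r - 1 := sub_pos.2 hr
  positivity

theorem hasDerivAt_stenzelWeight {r : ℝ} (hr : 1 < r) :
    HasDerivAt stenzelWeight
      (9 / 2 * (r * (r ^ 2 + 1) / ((r ^ 2 + 2) * (r + 1) * (r - 1))) * stenzelWeight r) r := by
  have h₁ : 0 < r ^ 2 + 2 := by positivity
  have h₂ : 0 < r + 1 := by linarith
  have h₃ : 0 < r - 1 := sub_pos.2 hr
  have d₁ := ((hasDerivAt_pow 2 r).add_const 2).rpow_const (p := 3 / 4) (Or.inl h₁.ne')
  have d₂ := ((hasDerivAt_id' r).add_const 1).rpow_const (p := 3 / 2) (Or.inl h₂.ne')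
  have d₃ := ((hasDerivAt_id' r).sub_const 1).rpow_const (p := 3 / 2) (Or.inl h₃.ne')
  refine ((d₁.mul d₂).mul d₃).congr_deriv ?_
  rw [Real.rpow_sub_one h₁.ne', Real.rpow_sub_one h₂.ne', Real.rpow_sub_one h₃.ne']
  simp only [stenzelWeight, Pi.mul_apply]
  field_simp
  ring

theorem stenzel_abelian_instanton_classification (α : ℝ → ℝ)
    (hα : ∀ r ∈ Set.Ioi (1 : ℝ),
      HasDerivAt α
        (-(9 / 2) * (r * (r ^ 2 + 1) / ((r ^ 2 + 2) * (r + 1) * (r - 1))) * α r) r) :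
    ∃ K : ℝ, ∀ r ∈ Set.Ioi (1 : ℝ),
      α r = K / ((r ^ 2 + 2) ^ ((3 : ℝ) / 4) * (r + 1) ^ ((3 : ℝ) / 2) * (r - 1) ^ ((3 : ℝ) / 2)) :=
  isOpen_Ioi.exists_eq_div_of_hasDerivAt_neg_mul isPreconnected_Ioi
    (fun _ hr => hasDerivAt_stenzelWeight hr) (fun _ hr => (stenzelWeight_pos hr).ne')
    (fun r hr => (hα r hr).congr_deriv (by ring))
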